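/- The even-indexed overcubic partition pair numbers satisfy the generating function identity ∑_{n≥0} b̄(2n) q^n = (q^2;q^2)_∞^{16} / ((q;q)_∞^{16} (q^4;q^4)_∞^4) as formal power series over ℤ. -/

import Mathlib

/-!
Write `E_d = (q^d; q^d)_∞`, `φ(q) = ∑_{i ∈ ℤ} q^{i²}`, `σ f(q) = f(-q)` and `ε f(q) = f(q²)`.
Three classical identities carry the proof:
* `E₁ · σE₁ · E₄ = E₂³`, by sorting the factors of `E₁ · σE₁` by parity;
* Gauss: `(σE₁)² = E₂ φ`. The `q`-binomial theorem for `∏_{k<2n} (z + q^{2k+1})` at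
  `z = q^{2n}` gives `∏_{k<n} (1 + q^{2k+1})² = ∑_{|i| ≤ n} q^{i²} [2n, n+i]_{q²}`, and
  `[2n, n+i]_{q²} (q²; q²)_n ≡ 1` modulo a power of `q` that grows with `n - |i|`;
* `φ(q)² + φ(-q)² = 2 φ(q²)²`, i.e. `r₂(2m) = r₂(m)` through `(a, b) ↦ ((a+b)/2, (a-b)/2)`.
For `f = ∑ b̄(n) qⁿ` they give `(f + σf) E₂¹⁶ E₈⁴ = 2 E₄¹⁶`, while `f + σf = 2 ε(∑ b̄(2n) qⁿ)`;
as `ε` is injective and sends `E_d` to `E_{2d}`, this is the claim. Infinite products and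
series are handled through their truncations, via congruences modulo `X^K`.
-/

/-- The formal power series `(q^d; q^d)_∞ = ∏_{m ≥ 1} (1 - q^{d·m})` over `ℤ`.
Its `n`-th coefficient is defined as the `n`-th coefficient of the finite truncated
product `∏_{m=1}^{n+1} (1 - q^{d·m})`; for `d ≥ 1` the omitted factors do not affect
the coefficient of `q^n`, so this is the usual infinite product. -/
noncomputable def pochE (d : ℕ) : PowerSeries ℤ :=
  PowerSeries.mk fun n =>
    PowerSeries.coeff n
      (∏ m ∈ Finset.range (n + 1), (1 - (PowerSeries.X : PowerSeries ℤ) ^ (d * (m + 1))))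

open PowerSeries Finset

section QAnalogues

variable {A : Type*} [CommRing A]

def qPochhammer (t : A) (n : ℕ) : A := ∏ k ∈ range n, (1 - t ^ (k + 1))

def qBinomial (t : A) : ℕ → ℕ → A
  | _, 0 => 1
  | 0, _ + 1 => 0
  | N + 1, j + 1 => qBinomial t N (j + 1) + t ^ (N - j) * qBinomial t N j

@[simp]
lemma qPochhammer_zero (t : A) : qPochhammer t 0 = 1 := prod_range_zero _

lemma qPochhammer_succ (t : A) (n : ℕ) :
    qPochhammer t (n + 1) = qPochhammer t n * (1 - t ^ (n + 1)) :=
  prod_range_succ _ _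

lemma qPochhammer_mul_prod_Ico (t : A) {a b : ℕ} (hab : a ≤ b) :
    qPochhammer t a * ∏ k ∈ Ico a b, (1 - t ^ (k + 1)) = qPochhammer t b :=
  prod_range_mul_prod_Ico _ hab

lemma map_qPochhammer {B F : Type*} [CommRing B] [FunLike F A B] [RingHomClass F A B] (φ : F)
    (t : A) (n : ℕ) : φ (qPochhammer t n) = qPochhammer (φ t) n := by
  simp [qPochhammer]

@[simp]
lemma qBinomial_zero_right (t : A) (N : ℕ) : qBinomial t N 0 = 1 := by cases N <;> rfl

lemma qBinomial_succ_succ (t : A) (N j : ℕ) :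
    qBinomial t (N + 1) (j + 1) = qBinomial t N (j + 1) + t ^ (N - j) * qBinomial t N j := rfl

lemma qBinomial_of_lt (t : A) : ∀ {N j : ℕ}, N < j → qBinomial t N j = 0
  | _, 0, h => absurd h (Nat.not_lt_zero _)
  | 0, _ + 1, _ => rfl
  | N + 1, j + 1, h => by
    rw [qBinomial_succ_succ, qBinomial_of_lt t (by omega), qBinomial_of_lt t (by omega : N < j)]
    ring

@[simp]
lemma qBinomial_self (t : A) (N : ℕ) : qBinomial t N N = 1 := by
  induction N with
  | zero => rfl
  | succ N ih => rw [qBinomial_succ_succ, qBinomial_of_lt t N.lt_succ_self, ih]; simp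

lemma qPochhammer_mul_qPochhammer_mul_qBinomial (t : A) (a b : ℕ) :
    qPochhammer t a * qPochhammer t b * qBinomial t (a + b) a = qPochhammer t (a + b) := by
  induction a generalizing b with
  | zero => simp
  | succ a iha =>
    induction b with
    | zero => simp
    | succ b ihb =>
      have h := iha (b + 1)
      rw [show a + (b + 1) = a + 1 + b by omega] at h
      rw [show a + 1 + (b + 1) = a + 1 + b + 1 by omega, qBinomial_succ_succ,
        show a + 1 + b - a = b + 1 by omega, qPochhammer_succ t (a + 1 + b)]
      rw [qPochhammer_succ t a] at ihb ⊢
      rw [qPochhammer_succ t b] at h ⊢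
      linear_combination (1 - t ^ (b + 1)) * ihb + t ^ (b + 1) * (1 - t ^ (a + 1)) * h

theorem prod_add_mul_pow_eq_sum_qBinomial (z a t : A) (N : ℕ) :
    ∏ k ∈ range N, (z + a * t ^ k) =
      ∑ p ∈ antidiagonal N, a ^ p.2 * t ^ p.2.choose 2 * qBinomial t N p.2 * z ^ p.1 := by
  induction N with
  | zero => simp
  | succ N ih =>
    set c : ℕ → A := fun j => a ^ j * t ^ j.choose 2 * qBinomial t N j with hc
    have hpascal : ∀ j, a ^ (j + 1) * t ^ (j + 1).choose 2 * qBinomial t (N + 1) (j + 1) =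
        c (j + 1) + a * t ^ N * c j := by
      intro j
      rcases le_or_gt j N with hj | hj
      · have e : t ^ (j + 1).choose 2 * t ^ (N - j) = t ^ N * t ^ j.choose 2 := by
          have hch : (j + 1).choose 2 = j + j.choose 2 := by
            rw [Nat.choose_succ_succ', Nat.choose_one_right]
          rw [← pow_add, ← pow_add, hch]
          congr 1
          omega
        rw [qBinomial_succ_succ]
        linear_combination a ^ (j + 1) * qBinomial t N j * e
      · simp [hc, qBinomial_of_lt t hj, qBinomial_of_lt t (Nat.lt_succ_of_lt hj),
          qBinomial_of_lt t (Nat.succ_lt_succ hj)]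
    have hshift : (∑ p ∈ antidiagonal N, c p.2 * z ^ p.1) * z =
        z ^ (N + 1) + ∑ p ∈ antidiagonal N, c (p.2 + 1) * z ^ p.1 := by
      have hcN : c (N + 1) = 0 := by simp [hc, qBinomial_of_lt t N.lt_succ_self]
      have hc0 : c 0 = 1 := by simp [hc]
      have h1 : ∑ p ∈ antidiagonal (N + 1), c p.2 * z ^ p.1 =
          (∑ p ∈ antidiagonal N, c p.2 * z ^ p.1) * z := by
        rw [Nat.sum_antidiagonal_succ, hcN, zero_mul, zero_add, sum_mul]
        simp only [pow_succ, mul_assoc]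
      rw [← h1, Nat.sum_antidiagonal_succ', hc0, one_mul]
    have ih' : ∏ k ∈ range N, (z + a * t ^ k) = ∑ p ∈ antidiagonal N, c p.2 * z ^ p.1 := ih
    rw [prod_range_succ, ih', Nat.sum_antidiagonal_succ', mul_add, hshift]
    simp only [hpascal, add_mul, sum_add_distrib, sum_mul, add_assoc, pow_zero,
      Nat.choose_zero_succ, qBinomial_zero_right, one_mul]
    congr 2
    exact sum_congr rfl fun p _ => by ring

lemma qPochhammer_two_mul (t : A) (n : ℕ) :
    qPochhammer t (2 * n) = qPochhammer (t ^ 2) n * ∏ k ∈ range n, (1 - t ^ (2 * k + 1)) := by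
  induction n with
  | zero => simp
  | succ n ih =>
    rw [show 2 * (n + 1) = 2 * n + 1 + 1 by ring, qPochhammer_succ, qPochhammer_succ, ih,
      qPochhammer_succ, prod_range_succ]
    ring

lemma qPochhammer_mul_qPochhammer_neg_mul_qPochhammer_pow_four (t : A) (n : ℕ) :
    qPochhammer t (2 * n) * qPochhammer (-t) (2 * n) * qPochhammer (t ^ 4) n =
      qPochhammer (t ^ 2) n ^ 2 * qPochhammer (t ^ 2) (2 * n) := by
  have hodd : (∏ k ∈ range n, (1 - t ^ (2 * k + 1))) * ∏ k ∈ range n, (1 - (-t) ^ (2 * k + 1)) =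
      ∏ k ∈ range n, (1 - (t ^ 2) ^ (2 * k + 1)) := by
    rw [← prod_mul_distrib]
    refine prod_congr rfl fun k _ => ?_
    rw [Odd.neg_pow ⟨k, rfl⟩]
    ring
  rw [qPochhammer_two_mul t, qPochhammer_two_mul (-t), qPochhammer_two_mul (t ^ 2), neg_sq,
    show (t ^ 2) ^ 2 = t ^ 4 by ring]
  linear_combination qPochhammer (t ^ 2) n ^ 2 * qPochhammer (t ^ 4) n * hodd

lemma prod_range_two_mul_pow_add_pow (y : A) (n : ℕ) :
    ∏ k ∈ range (2 * n), (y ^ (2 * n) + y ^ (2 * k + 1)) =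
      y ^ (3 * n ^ 2) * (∏ k ∈ range n, (1 + y ^ (2 * k + 1))) ^ 2 := by
  have hsum : ∑ k ∈ range n, (2 * k + 1) = n ^ 2 := by
    induction n with
    | zero => simp
    | succ n ih => rw [sum_range_succ, ih]; ring
  have hlow : ∏ k ∈ range n, (y ^ (2 * n) + y ^ (2 * k + 1)) =
      y ^ (n ^ 2) * ∏ k ∈ range n, (1 + y ^ (2 * k + 1)) := by
    have hfac : ∀ k ∈ range n, y ^ (2 * n) + y ^ (2 * k + 1) =
        y ^ (2 * k + 1) * (1 + y ^ (2 * (n - 1 - k) + 1)) := by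
      intro k hk
      rw [mem_range] at hk
      rw [mul_add, mul_one, ← pow_add, show 2 * k + 1 + (2 * (n - 1 - k) + 1) = 2 * n by omega,
        add_comm]
    rw [prod_congr rfl hfac, prod_mul_distrib, prod_pow_eq_pow_sum, hsum,
      prod_range_reflect (fun k => 1 + y ^ (2 * k + 1)) n]
  have hhigh : ∏ k ∈ range n, (y ^ (2 * n) + y ^ (2 * (n + k) + 1)) =
      y ^ (2 * n ^ 2) * ∏ k ∈ range n, (1 + y ^ (2 * k + 1)) := by
    have hfac : ∀ k ∈ range n, y ^ (2 * n) + y ^ (2 * (n + k) + 1) =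
        y ^ (2 * n) * (1 + y ^ (2 * k + 1)) := fun k _ => by ring
    rw [prod_congr rfl hfac, prod_mul_distrib, prod_const, card_range, ← pow_mul,
      show 2 * n * n = 2 * n ^ 2 by ring]
  rw [two_mul, prod_range_add, ← two_mul, hlow, hhigh]
  ring

lemma add_two_mul_choose_two (j : ℕ) : j + 2 * j.choose 2 = j ^ 2 := by
  induction j with
  | zero => simp
  | succ j ih =>
    rw [Nat.choose_succ_succ', Nat.choose_one_right]
    nlinarith [ih]

lemma pow_mul_prod_one_add_sq (y : A) (n : ℕ) :
    y ^ (3 * n ^ 2) * (∏ k ∈ range n, (1 + y ^ (2 * k + 1))) ^ 2 =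
      ∑ i ∈ Icc (-(n : ℤ)) n,
        y ^ (3 * n ^ 2 + i.natAbs ^ 2) * qBinomial (y ^ 2) (2 * n) (n + i).toNat := by
  have hprod := prod_add_mul_pow_eq_sum_qBinomial (y ^ (2 * n)) y (y ^ 2) (2 * n)
  simp_rw [← pow_mul, ← pow_succ'] at hprod
  rw [← prod_range_two_mul_pow_add_pow, hprod]
  refine sum_nbij' (fun p => (p.2 : ℤ) - n) (fun i => ((n - i).toNat, (n + i).toNat))
    ?_ ?_ ?_ ?_ ?_
  · intro p hp
    simp only [HasAntidiagonal.mem_antidiagonal] at hp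
    simp only [mem_Icc]
    omega
  · intro i hi
    simp only [mem_Icc] at hi
    simp only [HasAntidiagonal.mem_antidiagonal]
    omega
  · intro p hp
    simp only [HasAntidiagonal.mem_antidiagonal] at hp
    ext
    · dsimp only
      omega
    · simp
  · intro i hi
    simp only [mem_Icc] at hi
    simp only [Int.ofNat_toNat]
    omega
  · intro p hp
    simp only [HasAntidiagonal.mem_antidiagonal] at hp
    have hj : (n + ((p.2 : ℤ) - n)).toNat = p.2 := by omega
    have he : p.2 + 2 * p.2.choose 2 + 2 * n * p.1 = 3 * n ^ 2 + ((p.2 : ℤ) - n).natAbs ^ 2 := by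
      have hc := add_two_mul_choose_two p.2
      zify at hc hp ⊢
      rw [sq_abs]
      linear_combination hc + 2 * n * hp
    rw [hj, ← he, pow_add, pow_add]
    ring

end QAnalogues

section XAdic

variable {R : Type*} [CommRing R]

lemma smodEq_X_pow_iff {f g : R⟦X⟧} {K : ℕ} :
    f ≡ g [SMOD Ideal.span {X ^ K}] ↔ ∀ m < K, coeff m f = coeff m g := by
  simp only [SModEq.sub_mem, Ideal.mem_span_singleton, X_pow_dvd_iff, map_sub, sub_eq_zero]

lemma eq_of_forall_smodEq_X_pow {f g : R⟦X⟧} (h : ∀ K, f ≡ g [SMOD Ideal.span {X ^ K}]) :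
    f = g := by
  ext m
  exact smodEq_X_pow_iff.1 (h (m + 1)) m m.lt_succ_self

lemma SModEq.of_X_pow_le {f g : R⟦X⟧} {K L : ℕ} (hLK : L ≤ K)
    (h : f ≡ g [SMOD Ideal.span {X ^ K}]) : f ≡ g [SMOD Ideal.span {X ^ L}] :=
  h.mono (Ideal.span_singleton_le_span_singleton.2 (pow_dvd_pow X hLK))

lemma SModEq.X_pow_mul {f g : R⟦X⟧} {K : ℕ} (h : f ≡ g [SMOD Ideal.span {X ^ K}]) (e : ℕ) :
    X ^ e * f ≡ X ^ e * g [SMOD Ideal.span {X ^ (e + K)}] := by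
  rw [SModEq.sub_mem, Ideal.mem_span_singleton] at h ⊢
  rw [← mul_sub, pow_add]
  exact mul_dvd_mul_left _ h

lemma SModEq.rescale {f g : R⟦X⟧} {K : ℕ} (h : f ≡ g [SMOD Ideal.span {X ^ K}]) (a : R) :
    rescale a f ≡ rescale a g [SMOD Ideal.span {X ^ K}] := by
  rw [smodEq_X_pow_iff] at h ⊢
  intro m hm
  rw [coeff_rescale, coeff_rescale, h m hm]

lemma SModEq.expand {f g : R⟦X⟧} {K : ℕ} (h : f ≡ g [SMOD Ideal.span {X ^ K}]) (p : ℕ)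
    (hp : p ≠ 0) : expand p hp f ≡ expand p hp g [SMOD Ideal.span {X ^ K}] := by
  rw [smodEq_X_pow_iff] at h ⊢
  intro m hm
  rw [coeff_expand, coeff_expand]
  split_ifs
  · exact h _ ((Nat.div_le_self m p).trans_lt hm)
  · rfl

lemma prod_one_sub_smodEq_one {ι : Type*} {s : Finset ι} {f : ι → R⟦X⟧} {K : ℕ}
    (h : ∀ i ∈ s, X ^ K ∣ f i) : ∏ i ∈ s, (1 - f i) ≡ 1 [SMOD Ideal.span {X ^ K}] := by
  simpa using SModEq.prod (s := s) (y := fun _ => (1 : R⟦X⟧)) fun i hi =>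
    SModEq.sub_mem.2 (by simpa using Ideal.mem_span_singleton.2 (h i hi))

lemma mk_coeff_self_smodEq {F : ℕ → R⟦X⟧}
    (hF : ∀ n n', n ≤ n' → F n' ≡ F n [SMOD Ideal.span {X ^ (n + 1)}]) (n : ℕ) :
    PowerSeries.mk (fun m => coeff m (F m)) ≡ F n [SMOD Ideal.span {X ^ (n + 1)}] := by
  refine smodEq_X_pow_iff.2 fun m hm => ?_
  rw [coeff_mk]
  exact (smodEq_X_pow_iff.1 (hF m n (by omega)) m m.lt_succ_self).symm

lemma constantCoeff_qPochhammer_X_pow {d : ℕ} (hd : 0 < d) (n : ℕ) :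
    constantCoeff (qPochhammer (X ^ d : R⟦X⟧) n) = 1 := by
  simp [qPochhammer, map_prod, hd.ne']

lemma qPochhammer_X_pow_ne_zero [Nontrivial R] {d : ℕ} (hd : 0 < d) (n : ℕ) :
    qPochhammer (X ^ d : R⟦X⟧) n ≠ 0 := fun h => by
  simpa [h] using constantCoeff_qPochhammer_X_pow (R := R) hd n

lemma qPochhammer_X_pow_smodEq {d : ℕ} (hd : 0 < d) {N N' : ℕ} (h : N ≤ N') :
    qPochhammer (X ^ d : R⟦X⟧) N' ≡ qPochhammer (X ^ d) N [SMOD Ideal.span {X ^ (N + 1)}] := by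
  have htail : ∏ k ∈ Ico N N', (1 - (X ^ d : R⟦X⟧) ^ (k + 1)) ≡ 1
      [SMOD Ideal.span {X ^ (N + 1)}] := prod_one_sub_smodEq_one fun k hk => by
    rw [← pow_mul]
    exact pow_dvd_pow X (by rw [mem_Ico] at hk; nlinarith)
  have := (SModEq.refl (qPochhammer (X ^ d : R⟦X⟧) N)).mul htail
  rwa [mul_one, qPochhammer_mul_prod_Ico _ h] at this

end XAdic

section EvenPart

variable {R : Type*} [CommRing R]

lemma expand_injective (p : ℕ) (hp : p ≠ 0) :
    Function.Injective (expand p hp : R⟦X⟧ → R⟦X⟧) := fun f g h => by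
  ext m
  rw [← coeff_expand_mul p hp f m, h, coeff_expand_mul]

lemma rescale_neg_one_expand_two (f : R⟦X⟧) :
    rescale (-1) (expand 2 two_ne_zero f) = expand 2 two_ne_zero f := by
  ext n
  rw [coeff_rescale, coeff_expand]
  split_ifs with h
  · rw [(even_iff_two_dvd.2 h).neg_one_pow, one_mul]
  · rw [mul_zero]

lemma two_mul_expand_two_mk_coeff_two_mul (f : R⟦X⟧) :
    2 * expand 2 two_ne_zero (PowerSeries.mk fun n => coeff (2 * n) f) = f + rescale (-1) f := by
  ext n
  rw [two_mul, map_add, map_add, coeff_rescale, coeff_expand]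
  rcases Nat.even_or_odd n with ⟨m, rfl⟩ | hodd
  · rw [if_pos ⟨m, by ring⟩, coeff_mk, show (m + m) / 2 = m by omega, Even.neg_one_pow ⟨m, rfl⟩,
      one_mul, two_mul]
  · rw [if_neg (by rw [← even_iff_two_dvd]; exact Nat.not_even_iff_odd.2 hodd), hodd.neg_one_pow]
    ring

end EvenPart

section EulerProducts

lemma pochE_eq_mk (d : ℕ) :
    pochE d = PowerSeries.mk fun n => coeff n (qPochhammer (X ^ d) (n + 1)) := by
  simp only [pochE, qPochhammer, pow_mul]

lemma pochE_smodEq {d : ℕ} (hd : 0 < d) {K N : ℕ} (hK : K ≤ N + 1) :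
    pochE d ≡ qPochhammer (X ^ d) N [SMOD Ideal.span {X ^ K}] := by
  have hlim := mk_coeff_self_smodEq (F := fun n => qPochhammer (X ^ d : ℤ⟦X⟧) (n + 1))
    (fun n n' h => (qPochhammer_X_pow_smodEq hd (by omega)).of_X_pow_le (by omega)) N
  rw [← pochE_eq_mk] at hlim
  exact (hlim.trans (qPochhammer_X_pow_smodEq hd N.le_succ)).of_X_pow_le hK

lemma constantCoeff_pochE {d : ℕ} (hd : 0 < d) : constantCoeff (pochE d) = 1 := by
  simpa using smodEq_X_pow_iff.1 (pochE_smodEq hd (K := 1) (N := 0) le_rfl) 0 one_pos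

lemma pochE_ne_zero {d : ℕ} (hd : 0 < d) : pochE d ≠ 0 := fun h => by
  simpa [h] using constantCoeff_pochE hd

lemma expand_pochE {d : ℕ} (hd : 0 < d) : expand 2 two_ne_zero (pochE d) = pochE (2 * d) := by
  refine eq_of_forall_smodEq_X_pow fun K => ?_
  have h := (pochE_smodEq hd (K := K) (N := K) (by omega)).expand 2 two_ne_zero
  rw [map_qPochhammer, map_pow, expand_X, ← pow_mul] at h
  exact h.trans (pochE_smodEq (d := 2 * d) (by omega) (K := K) (N := K) (by omega)).symm

lemma rescale_neg_one_pochE_two_mul {d : ℕ} (hd : 0 < d) :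
    rescale (-1) (pochE (2 * d)) = pochE (2 * d) := by
  rw [← expand_pochE hd, rescale_neg_one_expand_two]

theorem pochE_one_mul_rescale_mul_pochE_four :
    pochE 1 * rescale (-1) (pochE 1) * pochE 4 = pochE 2 ^ 3 := by
  refine eq_of_forall_smodEq_X_pow fun K => ?_
  have h1 : pochE 1 ≡ qPochhammer X (2 * K) [SMOD Ideal.span {X ^ K}] := by
    simpa using pochE_smodEq one_pos (K := K) (N := 2 * K) (by omega)
  have h1' := h1.rescale (-1)
  rw [map_qPochhammer, rescale_neg_one_X] at h1'
  calc pochE 1 * rescale (-1) (pochE 1) * pochE 4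
      ≡ qPochhammer X (2 * K) * qPochhammer (-X) (2 * K) * qPochhammer (X ^ 4) K
        [SMOD Ideal.span {X ^ K}] :=
        (h1.mul h1').mul (pochE_smodEq (by norm_num) (K := K) (N := K) (by omega))
    _ = qPochhammer (X ^ 2) K ^ 2 * qPochhammer (X ^ 2) (2 * K) :=
        qPochhammer_mul_qPochhammer_neg_mul_qPochhammer_pow_four X K
    _ ≡ pochE 2 ^ 2 * pochE 2 [SMOD Ideal.span {X ^ K}] :=
        (((pochE_smodEq two_pos (K := K) (N := K) (by omega)).pow 2).mul
          (pochE_smodEq two_pos (K := K) (N := 2 * K) (by omega))).symm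
    _ = pochE 2 ^ 3 := by ring

end EulerProducts

section RamanujanPhi

noncomputable def ramanujanPhiTrunc (n : ℕ) : ℤ⟦X⟧ := ∑ i ∈ Icc (-(n : ℤ)) n, X ^ (i.natAbs ^ 2)

/-- `φ(q) = ∑_{i ∈ ℤ} q^{i²}`; the coefficient of `X^m` in `ramanujanPhiTrunc n` is constant for
`n ≥ m`. -/
noncomputable def ramanujanPhi : ℤ⟦X⟧ := PowerSeries.mk fun m => coeff m (ramanujanPhiTrunc m)

lemma ramanujanPhiTrunc_smodEq {n n' : ℕ} (h : n ≤ n') :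
    ramanujanPhiTrunc n' ≡ ramanujanPhiTrunc n [SMOD Ideal.span {X ^ (n + 1)}] := by
  rw [SModEq.sub_mem, ramanujanPhiTrunc, ramanujanPhiTrunc,
    ← sum_sdiff_eq_sub (Icc_subset_Icc (by omega) (by omega)), Ideal.mem_span_singleton]
  refine dvd_sum fun i hi => pow_dvd_pow X ?_
  simp only [mem_sdiff, mem_Icc] at hi
  have : n + 1 ≤ i.natAbs := by omega
  exact this.trans (Nat.le_self_pow two_ne_zero _)

lemma ramanujanPhi_smodEq {K n : ℕ} (hK : K ≤ n + 1) :
    ramanujanPhi ≡ ramanujanPhiTrunc n [SMOD Ideal.span {X ^ K}] :=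
  (mk_coeff_self_smodEq (fun _ _ h => ramanujanPhiTrunc_smodEq h) n).of_X_pow_le hK

lemma prod_one_add_X_pow_sq (n : ℕ) :
    (∏ k ∈ range n, (1 + X ^ (2 * k + 1) : ℤ⟦X⟧)) ^ 2 =
      ∑ i ∈ Icc (-(n : ℤ)) n, X ^ (i.natAbs ^ 2) * qBinomial (X ^ 2) (2 * n) (n + i).toNat := by
  refine mul_left_cancel₀ (pow_ne_zero (3 * n ^ 2) X_ne_zero) ?_
  rw [pow_mul_prod_one_add_sq, mul_sum]
  exact sum_congr rfl fun i _ => by rw [pow_add, mul_assoc]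

lemma qBinomial_mul_qPochhammer_smodEq_one {n m j : ℕ} (hm : m ≤ n) (hj : j = m ∨ j = 2 * n - m) :
    qBinomial (X ^ 2 : ℤ⟦X⟧) (2 * n) j * qPochhammer (X ^ 2) n ≡ 1
      [SMOD Ideal.span {X ^ (2 * m + 2)}] := by
  set t : ℤ⟦X⟧ := X ^ 2
  have hdag : qPochhammer t m * qPochhammer t (2 * n - m) * qBinomial t (2 * n) j =
      qPochhammer t (2 * n) := by
    obtain rfl | rfl := hj
    · simpa [show j + (2 * n - j) = 2 * n by omega] using
        qPochhammer_mul_qPochhammer_mul_qBinomial t j (2 * n - j)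
    · simpa [show 2 * n - m + m = 2 * n by omega, mul_comm (qPochhammer t m)] using
        qPochhammer_mul_qPochhammer_mul_qBinomial t (2 * n - m) m
  have hleft : qPochhammer t m * qBinomial t (2 * n) j =
      ∏ k ∈ Ico (2 * n - m) (2 * n), (1 - t ^ (k + 1)) := by
    refine mul_left_cancel₀ (qPochhammer_X_pow_ne_zero two_pos (2 * n - m)) ?_
    rw [qPochhammer_mul_prod_Ico t (by omega : 2 * n - m ≤ 2 * n), ← hdag]
    ring
  have htail : ∀ a b, m ≤ a → ∏ k ∈ Ico a b, (1 - t ^ (k + 1)) ≡ 1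
      [SMOD Ideal.span {X ^ (2 * m + 2)}] := fun a b ha =>
    prod_one_sub_smodEq_one fun k hk => by
      rw [← pow_mul]
      exact pow_dvd_pow X (by rw [mem_Ico] at hk; omega)
  have hsplit : qBinomial t (2 * n) j * qPochhammer t n =
      (∏ k ∈ Ico m n, (1 - t ^ (k + 1))) * ∏ k ∈ Ico (2 * n - m) (2 * n), (1 - t ^ (k + 1)) := by
    rw [← qPochhammer_mul_prod_Ico t hm, ← hleft]
    ring
  have h := (htail m n le_rfl).mul (htail (2 * n - m) (2 * n) (by omega))
  rwa [mul_one, ← hsplit] at h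

theorem rescale_neg_one_pochE_one_sq : rescale (-1) (pochE 1) ^ 2 = pochE 2 * ramanujanPhi := by
  refine eq_of_forall_smodEq_X_pow fun n => ?_
  have hodd : ∏ k ∈ range n, (1 - (-X : ℤ⟦X⟧) ^ (2 * k + 1)) =
      ∏ k ∈ range n, (1 + X ^ (2 * k + 1)) :=
    prod_congr rfl fun k _ => by rw [Odd.neg_pow ⟨k, rfl⟩, sub_neg_eq_add]
  have hE1 : rescale (-1) (pochE 1) ≡ qPochhammer (X ^ 2) n * ∏ k ∈ range n, (1 + X ^ (2 * k + 1))
      [SMOD Ideal.span {X ^ n}] := by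
    have h := (pochE_smodEq one_pos (K := n) (N := 2 * n) (by omega)).rescale (-1)
    rwa [map_qPochhammer, map_pow, rescale_neg_one_X, pow_one, qPochhammer_two_mul, neg_sq,
      hodd] at h
  have hterm : ∀ i ∈ Icc (-(n : ℤ)) n,
      (X : ℤ⟦X⟧) ^ (i.natAbs ^ 2) * qBinomial (X ^ 2) (2 * n) (n + i).toNat *
        qPochhammer (X ^ 2) n ≡ X ^ (i.natAbs ^ 2) [SMOD Ideal.span {X ^ n}] := by
    intro i hi
    rw [mem_Icc] at hi
    have h := (qBinomial_mul_qPochhammer_smodEq_one (n := n) (m := n - i.natAbs)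
      (j := (n + i).toNat) (by omega) (by omega)).X_pow_mul (i.natAbs ^ 2)
    rw [mul_one, ← mul_assoc] at h
    exact h.of_X_pow_le (by have := Nat.le_self_pow two_ne_zero i.natAbs; omega)
  calc rescale (-1) (pochE 1) ^ 2
      ≡ (qPochhammer (X ^ 2 : ℤ⟦X⟧) n * ∏ k ∈ range n, (1 + X ^ (2 * k + 1))) ^ 2
        [SMOD Ideal.span {X ^ n}] := hE1.pow 2
    _ = qPochhammer (X ^ 2 : ℤ⟦X⟧) n * ∑ i ∈ Icc (-(n : ℤ)) n,
          X ^ (i.natAbs ^ 2) * qBinomial (X ^ 2) (2 * n) (n + i).toNat * qPochhammer (X ^ 2) n := by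
        rw [mul_pow, prod_one_add_X_pow_sq, mul_sum, mul_sum]
        exact sum_congr rfl fun i _ => by ring
    _ ≡ qPochhammer (X ^ 2 : ℤ⟦X⟧) n * ramanujanPhiTrunc n [SMOD Ideal.span {X ^ n}] :=
        (SModEq.refl _).mul (SModEq.sum hterm)
    _ ≡ pochE 2 * ramanujanPhi [SMOD Ideal.span {X ^ n}] :=
        ((pochE_smodEq two_pos (K := n) (N := n) (by omega)).mul
          (ramanujanPhi_smodEq (K := n) (n := n) (by omega))).symm

lemma coeff_ramanujanPhiTrunc_sq (N m : ℕ) :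
    coeff m (ramanujanPhiTrunc N ^ 2) =
      (#{p ∈ Icc (-(N : ℤ)) N ×ˢ Icc (-(N : ℤ)) N | p.1 ^ 2 + p.2 ^ 2 = (m : ℤ)} : ℤ) := by
  rw [sq, ramanujanPhiTrunc, sum_mul_sum, ← sum_product', map_sum]
  simp_rw [← pow_add, coeff_X_pow]
  rw [sum_boole]
  congr 2
  refine filter_congr fun p _ => ?_
  rw [eq_comm, ← Int.natCast_inj]
  push_cast
  simp [sq_abs]

lemma mem_Icc_of_sq_le {a : ℤ} {N : ℕ} (h : a ^ 2 ≤ N) : a ∈ Icc (-(N : ℤ)) N :=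
  mem_Icc.2 ⟨by nlinarith [Int.le_self_sq (-a)], by nlinarith [Int.le_self_sq a]⟩

lemma even_add_of_sq_add_sq_eq_two_mul {a b m : ℤ} (h : a ^ 2 + b ^ 2 = 2 * m) : Even (a + b) :=
  (Int.even_pow.1 (⟨m + a * b, by linear_combination h⟩ : Even ((a + b) ^ 2))).1

lemma card_sq_add_sq_eq_two_mul {N m : ℕ} (hm : 2 * m ≤ N) :
    #{p ∈ Icc (-(N : ℤ)) N ×ˢ Icc (-(N : ℤ)) N | p.1 ^ 2 + p.2 ^ 2 = ((2 * m : ℕ) : ℤ)} =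
      #{p ∈ Icc (-(N : ℤ)) N ×ˢ Icc (-(N : ℤ)) N | p.1 ^ 2 + p.2 ^ 2 = (m : ℤ)} := by
  refine card_nbij' (fun p => ((p.1 + p.2) / 2, (p.1 - p.2) / 2)) (fun q => (q.1 + q.2, q.1 - q.2))
    ?_ ?_ ?_ ?_
  · rintro ⟨a, b⟩ h
    simp only [mem_coe, mem_filter, mem_product] at h ⊢
    push_cast at h
    obtain ⟨k, hk⟩ := even_add_of_sq_add_sq_eq_two_mul h.2
    rw [show (a + b) / 2 = k by omega, show (a - b) / 2 = k - b by omega]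
    have hsq : k ^ 2 + (k - b) ^ 2 = m := by
      rw [show a = 2 * k - b by omega] at h
      linarith [h.2]
    exact ⟨⟨mem_Icc_of_sq_le (by nlinarith), mem_Icc_of_sq_le (by nlinarith)⟩, hsq⟩
  · rintro ⟨c, d⟩ h
    simp only [mem_coe, mem_filter, mem_product] at h ⊢
    have hsq : (c + d) ^ 2 + (c - d) ^ 2 = ((2 * m : ℕ) : ℤ) := by
      push_cast
      linear_combination 2 * h.2
    exact ⟨⟨mem_Icc_of_sq_le (by nlinarith), mem_Icc_of_sq_le (by nlinarith)⟩, hsq⟩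
  · rintro ⟨a, b⟩ h
    simp only [mem_coe, mem_filter] at h
    push_cast at h
    obtain ⟨k, hk⟩ := even_add_of_sq_add_sq_eq_two_mul h.2
    simp only [Prod.mk.injEq]
    omega
  · rintro ⟨c, d⟩ -
    simp only [Prod.mk.injEq]
    omega

lemma coeff_two_mul_ramanujanPhi_sq (m : ℕ) :
    coeff (2 * m) (ramanujanPhi ^ 2) = coeff m (ramanujanPhi ^ 2) := by
  have h := smodEq_X_pow_iff.1 ((ramanujanPhi_smodEq (K := 2 * m + 1) (n := 2 * m) le_rfl).pow 2)
  rw [h (2 * m) (by omega), h m (by omega), coeff_ramanujanPhiTrunc_sq,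
    coeff_ramanujanPhiTrunc_sq, card_sq_add_sq_eq_two_mul le_rfl]

theorem ramanujanPhi_sq_add_rescale_sq :
    ramanujanPhi ^ 2 + rescale (-1) ramanujanPhi ^ 2 =
      2 * expand 2 two_ne_zero ramanujanPhi ^ 2 := by
  have heven : (PowerSeries.mk fun n => coeff (2 * n) (ramanujanPhi ^ 2)) = ramanujanPhi ^ 2 := by
    ext m
    rw [coeff_mk, coeff_two_mul_ramanujanPhi_sq]
  rw [← map_pow, ← map_pow, ← two_mul_expand_two_mk_coeff_two_mul, heven]

end RamanujanPhi

section Assembly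

lemma ramanujanPhi_mul_pochE_one_sq_mul_pochE_four_sq :
    ramanujanPhi * pochE 1 ^ 2 * pochE 4 ^ 2 = pochE 2 ^ 5 := by
  refine mul_left_cancel₀ (pochE_ne_zero two_pos) ?_
  calc pochE 2 * (ramanujanPhi * pochE 1 ^ 2 * pochE 4 ^ 2)
      = (pochE 1 * rescale (-1) (pochE 1) * pochE 4) ^ 2 := by
        rw [mul_pow, mul_pow, rescale_neg_one_pochE_one_sq]
        ring
    _ = pochE 2 * pochE 2 ^ 5 := by
        rw [pochE_one_mul_rescale_mul_pochE_four]
        ring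

lemma mul_pochE_two_pow_twelve {f : ℤ⟦X⟧} (hf : f * (pochE 1 ^ 4 * pochE 2 ^ 2) = pochE 4 ^ 2) :
    f * pochE 2 ^ 12 = pochE 4 ^ 6 * ramanujanPhi ^ 2 := by
  rw [show pochE 2 ^ 12 = pochE 2 ^ 2 * (pochE 2 ^ 5) ^ 2 by ring,
    ← ramanujanPhi_mul_pochE_one_sq_mul_pochE_four_sq]
  linear_combination (ramanujanPhi ^ 2 * pochE 4 ^ 4) * hf

lemma add_rescale_neg_one_mul_pochE {f : ℤ⟦X⟧}
    (hf : f * (pochE 1 ^ 4 * pochE 2 ^ 2) = pochE 4 ^ 2) :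
    (f + rescale (-1) f) * (pochE 2 ^ 16 * pochE 8 ^ 4) = 2 * pochE 4 ^ 16 := by
  have hσ2 : rescale (-1) (pochE 2) = pochE 2 := rescale_neg_one_pochE_two_mul (d := 1) one_pos
  have hσ4 : rescale (-1) (pochE 4) = pochE 4 := rescale_neg_one_pochE_two_mul (d := 2) two_pos
  have h := mul_pochE_two_pow_twelve hf
  have hσ : rescale (-1) f * pochE 2 ^ 12 = pochE 4 ^ 6 * rescale (-1) ramanujanPhi ^ 2 := by
    simpa only [map_mul, map_pow, hσ2, hσ4] using congrArg (rescale (-1)) h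
  have hexpand : expand 2 two_ne_zero ramanujanPhi * pochE 2 ^ 2 * pochE 8 ^ 2 = pochE 4 ^ 5 := by
    have hε1 : expand 2 two_ne_zero (pochE 1) = pochE 2 := expand_pochE one_pos
    have hε2 : expand 2 two_ne_zero (pochE 2) = pochE 4 := expand_pochE two_pos
    have hε4 : expand 2 two_ne_zero (pochE 4) = pochE 8 := expand_pochE (by norm_num)
    simpa only [map_mul, map_pow, hε1, hε2, hε4] using
      congrArg (expand 2 two_ne_zero) ramanujanPhi_mul_pochE_one_sq_mul_pochE_four_sq
  calc (f + rescale (-1) f) * (pochE 2 ^ 16 * pochE 8 ^ 4)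
      = (f * pochE 2 ^ 12 + rescale (-1) f * pochE 2 ^ 12) * pochE 2 ^ 4 * pochE 8 ^ 4 := by ring
    _ = pochE 4 ^ 6 * (ramanujanPhi ^ 2 + rescale (-1) ramanujanPhi ^ 2) * pochE 2 ^ 4 *
          pochE 8 ^ 4 := by rw [h, hσ]; ring
    _ = 2 * pochE 4 ^ 6 * (expand 2 two_ne_zero ramanujanPhi * pochE 2 ^ 2 * pochE 8 ^ 2) ^ 2 := by
        rw [ramanujanPhi_sq_add_rescale_sq]; ring
    _ = 2 * pochE 4 ^ 16 := by rw [hexpand]; ring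

end Assembly

/-- If `bb` is the overcubic partition pair function, i.e. the sequence whose generating
function is `∑ bb(n) qⁿ = (q⁴;q⁴)_∞² / ((q;q)_∞⁴ (q²;q²)_∞²)`, then
`∑ bb(2n) qⁿ = (q²;q²)_∞¹⁶ / ((q;q)_∞¹⁶ (q⁴;q⁴)_∞⁴)` as formal power series over ℤ.
(The divisor series has constant term 1, hence is invertible; its inverse is
`PowerSeries.invOfUnit _ 1`.) -/
theorem overcubic_partition_pair_even_genfun (bb : ℕ → ℤ)
    (hbb : PowerSeries.mk bb * ((pochE 1) ^ 4 * (pochE 2) ^ 2) = (pochE 4) ^ 2) :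
    PowerSeries.mk (fun n => bb (2 * n)) =
      (pochE 2) ^ 16 * PowerSeries.invOfUnit ((pochE 1) ^ 16 * (pochE 4) ^ 4) 1 := by
  have heven : 2 * expand 2 two_ne_zero (PowerSeries.mk fun n => bb (2 * n)) =
      PowerSeries.mk bb + rescale (-1) (PowerSeries.mk bb) := by
    simpa only [coeff_mk] using two_mul_expand_two_mk_coeff_two_mul (PowerSeries.mk bb)
  have hε1 : expand 2 two_ne_zero (pochE 1) = pochE 2 := expand_pochE one_pos
  have hε4 : expand 2 two_ne_zero (pochE 4) = pochE 8 := expand_pochE (by norm_num)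
  have hε2 : expand 2 two_ne_zero (pochE 2) = pochE 4 := expand_pochE two_pos
  have htwo : (2 : ℤ⟦X⟧) ≠ 0 := fun h => by
    have h0 := congrArg constantCoeff h
    rw [map_ofNat, map_zero] at h0
    exact two_ne_zero h0
  have hmul : PowerSeries.mk (fun n => bb (2 * n)) * (pochE 1 ^ 16 * pochE 4 ^ 4) =
      pochE 2 ^ 16 := by
    refine expand_injective 2 two_ne_zero (mul_left_cancel₀ htwo ?_)
    rw [map_mul, map_mul, map_pow, map_pow, map_pow, hε1, hε2, hε4, ← mul_assoc,
      heven, add_rescale_neg_one_mul_pochE hbb]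
  rw [← hmul, mul_assoc, mul_invOfUnit _ 1 (by simp [constantCoeff_pochE]), mul_one]
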